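/- arXiv:math/0303384 — 5 statements merged into one kernel-verified Lean document; each statement's English description precedes it below -/
import Mathlib

section
/- For integers n ≥ 2 and 1 ≤ t ≤ n, the identity (-1)^{t+1} · Σ_{i=t+1}^{n} (-1)^i · C(n,i) · i = C(n-2, t-1) + C(n-1, t) · t holds. -/
lemma stmt_2_aux : ∀ k m s : ℕ, s + 1 + k = m + 2 →
    (-1 : ℤ) ^ (s + 2) *
        ∑ i ∈ Finset.Icc (s + 2) (m + 2), (-1 : ℤ) ^ i * ((m + 2).choose i : ℤ) * (i : ℤ) =
      (m.choose s : ℤ) + ((m + 1).choose (s + 1) : ℤ) * ((s : ℤ) + 1) := by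
  intro k
  induction k with
  | zero =>
    intro m s h
    have hs : s = m + 1 := by omega
    subst hs
    rw [Finset.Icc_eq_empty (by omega)]
    simp [Nat.choose_eq_zero_of_lt]
  | succ k ih =>
    intro m s h
    have hIH := ih m (s + 1) (by omega)
    have hsplit : Finset.Icc (s + 2) (m + 2) = insert (s + 2) (Finset.Icc (s + 3) (m + 2)) := by
      ext x
      simp only [Finset.mem_Icc, Finset.mem_insert]
      omega
    rw [hsplit, Finset.sum_insert (by simp [Finset.mem_Icc])]
    set a : ℤ := (-1) ^ (s + 2) with ha_def
    have ha : a * a = 1 := by rw [ha_def, ← mul_pow]; norm_num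
    have hIH' : -a * (∑ i ∈ Finset.Icc (s + 3) (m + 2),
        (-1 : ℤ) ^ i * ((m + 2).choose i : ℤ) * (i : ℤ)) =
        (m.choose (s + 1) : ℤ) + ((m + 1).choose (s + 2) : ℤ) * ((s : ℤ) + 2) := by
      have : (-1 : ℤ) ^ (s + 1 + 2) = -a := by rw [ha_def]; ring
      rw [this] at hIH
      convert hIH using 2 <;> push_cast <;> ring
    have h1 : ((m + 2).choose (s + 2) : ℤ) =
        ((m + 1).choose (s + 1) : ℤ) + ((m + 1).choose (s + 2) : ℤ) := by
      exact_mod_cast congrArg (Nat.cast : ℕ → ℤ) (Nat.choose_succ_succ (m + 1) (s + 1))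
    have h2 : ((m + 1).choose (s + 1) : ℤ) = (m.choose s : ℤ) + (m.choose (s + 1) : ℤ) := by
      exact_mod_cast congrArg (Nat.cast : ℕ → ℤ) (Nat.choose_succ_succ m s)
    have hcast : ((s + 2 : ℕ) : ℤ) = (s : ℤ) + 2 := by push_cast; ring
    rw [hcast]
    linear_combination ((m + 2).choose (s + 2) : ℤ) * ((s : ℤ) + 2) * ha - hIH' +
      ((s : ℤ) + 2) * h1 + h2

/-- For `n ≥ 2` and `1 ≤ t ≤ n`,
`(-1)^(t+1) · Σ_{i=t+1}^{n} (-1)^i · C(n,i) · i = C(n-2,t-1) + C(n-1,t)·t`. -/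
theorem stmt_2 (n t : ℕ) (hn : 2 ≤ n) (ht : 1 ≤ t) (htn : t ≤ n) :
    (-1 : ℤ) ^ (t + 1) *
        ∑ i ∈ Finset.Icc (t + 1) n, (-1 : ℤ) ^ i * (n.choose i : ℤ) * (i : ℤ) =
      ((n - 2).choose (t - 1) : ℤ) + ((n - 1).choose t : ℤ) * (t : ℤ) := by
  obtain ⟨m, rfl⟩ : ∃ m, n = m + 2 := ⟨n - 2, by omega⟩
  obtain ⟨s, rfl⟩ : ∃ s, t = s + 1 := ⟨t - 1, by omega⟩
  have := stmt_2_aux (m + 1 - s) m s (by omega)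
  simpa [show m + 2 - 2 = m from rfl, show m + 2 - 1 = m + 1 from rfl,
    show s + 1 - 1 = s from rfl] using this
end

section
/- For integers n ≥ 3 and 1 ≤ t ≤ n, the identity (-1)^{t+1} · Σ_{i=t+1}^{n} (-1)^i · C(n,i) · i² = C(n-1,t)·(t+1)² − C(n-2,t)·(2t+1) − 2·C(n-3,t-1) holds. -/
lemma aux_stmt3 (m : ℕ) : ∀ j t, 1 ≤ t → t + j = m + 3 →
    (-1 : ℤ) ^ (t + 1) *
        ∑ i ∈ Finset.Icc (t + 1) (m + 3), (-1 : ℤ) ^ i * ((m+3).choose i : ℤ) * (i : ℤ) ^ 2 =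
      ((m + 2).choose t : ℤ) * ((t : ℤ) + 1) ^ 2 -
        ((m + 1).choose t : ℤ) * (2 * (t : ℤ) + 1) -
        2 * (m.choose (t - 1) : ℤ) := by
  intro j
  induction j with
  | zero =>
    intro t ht hteq
    have : t = m + 3 := by omega
    subst this
    rw [Finset.Icc_eq_empty (by omega)]
    rw [Nat.choose_eq_zero_of_lt (by omega), Nat.choose_eq_zero_of_lt (by omega),
      Nat.choose_eq_zero_of_lt (by omega)]
    simp
  | succ j ih =>
    intro t ht hteq
    obtain ⟨s, rfl⟩ : ∃ s, t = s + 1 := ⟨t - 1, by omega⟩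
    have hIH := ih (s + 2) (by omega) (by omega)
    have hins : insert (s + 2) (Finset.Icc (s + 3) (m + 3)) = Finset.Icc (s + 2) (m + 3) :=
      Finset.insert_Icc_add_one_left_eq_Icc (by omega)
    rw [← hins, Finset.sum_insert (by simp)]
    have hA : ((m+3).choose (s+2) : ℤ) = (m+2).choose (s+1) + (m+2).choose (s+2) := by
      exact_mod_cast Nat.choose_succ_succ' (m+2) (s+1)
    have hB : ((m+2).choose (s+2) : ℤ) = (m+1).choose (s+1) + (m+1).choose (s+2) := by
      exact_mod_cast Nat.choose_succ_succ' (m+1) (s+1)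
    have hC : ((m+1).choose (s+1) : ℤ) = m.choose s + m.choose (s+1) := by
      exact_mod_cast Nat.choose_succ_succ' m s
    have h1 : ((-1 : ℤ)) ^ (s+2) * (-1 : ℤ) ^ (s+2) = 1 := by
      rw [← pow_add]; exact Even.neg_one_pow ⟨s + 2, by ring⟩
    simp only [Nat.add_sub_cancel] at hIH ⊢
    have h2 : (s + 2 + 1) = (s + 2) + 1 := rfl
    rw [h2, pow_succ] at hIH
    push_cast at hIH ⊢
    linear_combination ((m+3).choose (s+2) : ℤ) * ((s:ℤ)+2)^2 * h1 - hIH +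
      ((s:ℤ)+2)^2 * hA - (2*(s:ℤ)+5) * hB - 2 * hC

/-- For `n ≥ 3` and `1 ≤ t ≤ n`,
`(-1)^(t+1) · Σ_{i=t+1}^{n} (-1)^i · C(n,i) · i² =
  C(n-1,t)·(t+1)² − C(n-2,t)·(2t+1) − 2·C(n-3,t-1)`. -/
theorem stmt_3 (n t : ℕ) (hn : 3 ≤ n) (ht : 1 ≤ t) (htn : t ≤ n) :
    (-1 : ℤ) ^ (t + 1) *
        ∑ i ∈ Finset.Icc (t + 1) n, (-1 : ℤ) ^ i * (n.choose i : ℤ) * (i : ℤ) ^ 2 =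
      ((n - 1).choose t : ℤ) * ((t : ℤ) + 1) ^ 2 -
        ((n - 2).choose t : ℤ) * (2 * (t : ℤ) + 1) -
        2 * ((n - 3).choose (t - 1) : ℤ) := by
  obtain ⟨m, rfl⟩ : ∃ m, n = m + 3 := ⟨n - 3, by omega⟩
  have := aux_stmt3 m (m + 3 - t) t ht (by omega)
  simpa using this
end

section
/- With Q(λ) as above, q = p + C(n−1,t) + n − 2, and assuming Σ_{i=1}^q b_i − Σ_{i=1}^p a_i = n² − (2+d)n + c + d + C(n−2,t−1) + C(n−1,t)t, one has Q''(1) = 0 if and only if Σ_{i=1}^q b_i² − Σ_{i=1}^p a_i² = n³ − (3+2d)n² + (d²+4d+1)n − c² − d² + C(n−1,t)(t+1)² − C(n−2,t)(2t+1) − 2C(n−3,t−1). -/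
/-!
For a Laurent polynomial `Σ w_e λ^e`, the second derivative at `1` is `Σ w_e e (e - 1)`.
Writing `e = x + c`, the terms `λ^(a_i + c)`, `λ^(b_i + c)` contribute the power sums of the
`a_i`, `b_i` up to degree two, and the binomial tail contributes the alternating moments
`Σ_{i > t} (-1)^i C(n,i) i^k`, `k ≤ 2`. Since `(-1)^i C(N+1,i)` is the difference of the
consecutive terms `(-1)^i C(N,i)` and `(-1)^(i-1) C(N,i-1)`, summation by parts lowers both `N`
and `k`, which evaluates these moments in closed form. With the prescribed values of `q - p` and
`Σ b_i - Σ a_i`, the condition `Q''(1) = 0` then becomes a linear equation for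
`Σ b_i² - Σ a_i²`.
-/

/-- The numerator `Q(λ)` of the Hilbert series:
`Q(λ) = 1 − n λ^{n−1+c−d} + λ^{n+c−d} + Σ λ^{b_i+c} − Σ λ^{a_i+c}
  + (−1)^t λ^c Σ_{i=t+1}^n (−1)^i C(n,i) λ^i`, viewed as a function of a real variable
(so that the second formal derivative of the Laurent polynomial at `1` is
`deriv (deriv ·)` at `1`). -/
noncomputable def hilbQ (n t : ℕ) (c d : ℤ) (p q : ℕ) (a : Fin p → ℤ) (b : Fin q → ℤ) :
    ℝ → ℝ := fun x =>
  1 - (n : ℝ) * x ^ ((n : ℤ) - 1 + c - d) + x ^ ((n : ℤ) + c - d)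
    + ∑ i, x ^ (b i + c) - ∑ i, x ^ (a i + c)
    + (-1 : ℝ) ^ t * x ^ c *
        ∑ i ∈ Finset.Icc (t + 1) n, (-1 : ℝ) ^ i * (n.choose i : ℝ) * x ^ (i : ℤ)

open Finset Filter Topology

section SecondDeriv

variable {𝕜 : Type*} [NontriviallyNormedField 𝕜] {f g : 𝕜 → 𝕜} {f'' g'' x : 𝕜}

/-- Unlike `deriv (deriv f) x = f''`, this is stable under sums. -/
def HasSecondDerivAt (f : 𝕜 → 𝕜) (f'' x : 𝕜) : Prop :=
  ∃ f' : 𝕜 → 𝕜, (∀ᶠ y in 𝓝 x, HasDerivAt f (f' y) y) ∧ HasDerivAt f' f'' x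

theorem HasSecondDerivAt.deriv_deriv (h : HasSecondDerivAt f f'' x) : deriv (deriv f) x = f'' := by
  obtain ⟨f', hf', hf''⟩ := h
  rw [EventuallyEq.deriv_eq (hf'.mono fun y hy => hy.deriv)]
  exact hf''.deriv

theorem HasSecondDerivAt.congr_of_eventuallyEq {f₁ : 𝕜 → 𝕜} (h : HasSecondDerivAt f f'' x)
    (h₁ : f₁ =ᶠ[𝓝 x] f) : HasSecondDerivAt f₁ f'' x := by
  obtain ⟨f', hf', hf''⟩ := h
  exact ⟨f', (hf'.and h₁.eventuallyEq_nhds).mono fun y hy => hy.1.congr_of_eventuallyEq hy.2, hf''⟩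

theorem hasSecondDerivAt_const (x c : 𝕜) : HasSecondDerivAt (fun _ => c) 0 x :=
  ⟨fun _ => 0, Eventually.of_forall fun y => hasDerivAt_const y c, hasDerivAt_const x 0⟩

theorem HasSecondDerivAt.add (hf : HasSecondDerivAt f f'' x) (hg : HasSecondDerivAt g g'' x) :
    HasSecondDerivAt (fun y => f y + g y) (f'' + g'') x := by
  obtain ⟨f', hf', hf''⟩ := hf
  obtain ⟨g', hg', hg''⟩ := hg
  exact ⟨fun y => f' y + g' y, (hf'.and hg').mono fun y hy => hy.1.add hy.2, hf''.add hg''⟩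

theorem HasSecondDerivAt.sub (hf : HasSecondDerivAt f f'' x) (hg : HasSecondDerivAt g g'' x) :
    HasSecondDerivAt (fun y => f y - g y) (f'' - g'') x := by
  obtain ⟨f', hf', hf''⟩ := hf
  obtain ⟨g', hg', hg''⟩ := hg
  exact ⟨fun y => f' y - g' y, (hf'.and hg').mono fun y hy => hy.1.sub hy.2, hf''.sub hg''⟩

theorem HasSecondDerivAt.const_mul (c : 𝕜) (hf : HasSecondDerivAt f f'' x) :
    HasSecondDerivAt (fun y => c * f y) (c * f'') x := by
  obtain ⟨f', hf', hf''⟩ := hf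
  exact ⟨fun y => c * f' y, hf'.mono fun y hy => hy.const_mul c, hf''.const_mul c⟩

theorem HasSecondDerivAt.sum {ι : Type*} {s : Finset ι} {f : ι → 𝕜 → 𝕜} {f'' : ι → 𝕜}
    (h : ∀ i ∈ s, HasSecondDerivAt (f i) (f'' i) x) :
    HasSecondDerivAt (fun y => ∑ i ∈ s, f i y) (∑ i ∈ s, f'' i) x := by
  classical
  induction s using Finset.induction_on with
  | empty => simpa using hasSecondDerivAt_const x 0
  | insert i s hi ih =>
    simp_rw [sum_insert hi]
    exact (h i (mem_insert_self i s)).add (ih fun j hj => h j (mem_insert_of_mem hj))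

theorem hasSecondDerivAt_zpow (k : ℤ) (hx : x ≠ 0) :
    HasSecondDerivAt (fun y => y ^ k) (k * (k - 1) * x ^ (k - 2)) x := by
  refine ⟨fun y => k * y ^ (k - 1), (eventually_ne_nhds hx).mono fun y hy =>
    hasDerivAt_zpow k y (.inl hy), ?_⟩
  exact ((hasDerivAt_zpow (k - 1) x (.inl hx)).const_mul (k : 𝕜)).congr_deriv
    (by push_cast; rw [sub_sub, one_add_one_eq_two, mul_assoc])

end SecondDeriv

section AlternatingBinomial

variable {R : Type*} [CommRing R]

theorem sum_Icc_neg_one_pow_mul_choose_succ_mul_eq (N : ℕ) {t M : ℕ} (htM : t ≤ M)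
    (g : ℕ → R) :
    ∑ i ∈ Icc (t + 1) M, (-1) ^ i * ((N + 1).choose i : R) * g i =
      (-1) ^ M * (N.choose M : R) * g (M + 1) - (-1) ^ t * (N.choose t : R) * g (t + 1) -
        ∑ i ∈ Icc (t + 1) M, (-1) ^ i * (N.choose i : R) * (g (i + 1) - g i) := by
  induction M, htM using Nat.le_induction with
  | base => simp
  | succ M htM ih =>
    rw [sum_Icc_succ_top (by omega), sum_Icc_succ_top (by omega), ih, Nat.choose_succ_succ']
    push_cast
    ring

theorem sum_Icc_neg_one_pow_mul_choose_succ_mul {N M : ℕ} (hNM : N < M) (t : ℕ)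
    {g h : ℕ → R} (hgh : ∀ i, g (i + 1) - g i = h i) :
    ∑ i ∈ Icc (t + 1) M, (-1) ^ i * ((N + 1).choose i : R) * g i =
      (-1) ^ (t + 1) * (N.choose t : R) * g (t + 1) -
        ∑ i ∈ Icc (t + 1) M, (-1) ^ i * (N.choose i : R) * h i := by
  rcases le_or_gt t M with htM | hMt
  · simp_rw [sum_Icc_neg_one_pow_mul_choose_succ_mul_eq N htM, hgh,
      Nat.choose_eq_zero_of_lt hNM]
    ring
  · simp [Icc_eq_empty_of_lt (by omega : M < t + 1), Nat.choose_eq_zero_of_lt (hNM.trans hMt)]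

theorem sum_Icc_neg_one_pow_mul_choose_succ {N M : ℕ} (hNM : N < M) (t : ℕ) :
    ∑ i ∈ Icc (t + 1) M, (-1) ^ i * ((N + 1).choose i : R) = (-1) ^ (t + 1) * N.choose t := by
  simpa using sum_Icc_neg_one_pow_mul_choose_succ_mul hNM t (g := fun _ => (1 : R))
    (h := 0) (fun _ => sub_self 1)

end AlternatingBinomial

theorem sum_Icc_neg_one_pow_mul_choose {n : ℕ} (hn : 1 ≤ n) (t : ℕ) :
    ∑ i ∈ Icc (t + 1) n, (-1) ^ i * (n.choose i : ℤ) = (-1) ^ (t + 1) * (n - 1).choose t := by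
  obtain ⟨m, rfl⟩ : ∃ m, n = m + 1 := ⟨n - 1, by omega⟩
  exact sum_Icc_neg_one_pow_mul_choose_succ (lt_add_one m) t

theorem sum_Icc_neg_one_pow_mul_choose_mul {n t : ℕ} (hn : 2 ≤ n) (ht : 1 ≤ t) :
    ∑ i ∈ Icc (t + 1) n, (-1) ^ i * (n.choose i : ℤ) * i =
      (-1) ^ (t + 1) * (((n - 2).choose (t - 1) : ℤ) + ((n - 1).choose t : ℤ) * t) := by
  obtain ⟨m, rfl⟩ : ∃ m, n = m + 2 := ⟨n - 2, by omega⟩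
  obtain ⟨s, rfl⟩ : ∃ s, t = s + 1 := ⟨t - 1, by omega⟩
  have h1 := sum_Icc_neg_one_pow_mul_choose_succ_mul (N := m + 1) (M := m + 2) (by omega) (s + 1)
    (g := fun i => (i : ℤ)) (h := fun _ => 1) (fun i => by push_cast; ring)
  have h0 := sum_Icc_neg_one_pow_mul_choose_succ (R := ℤ) (N := m) (M := m + 2) (by omega) (s + 1)
  have pascal : ((m + 1).choose (s + 1) : ℤ) = m.choose s + m.choose (s + 1) := by
    exact_mod_cast Nat.choose_succ_succ' m s
  simp only [mul_one] at h1
  simp only [Nat.add_sub_cancel]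
  rw [h1, h0]
  push_cast
  linear_combination (-1 : ℤ) ^ (s + 1 + 1) * pascal

theorem sum_Icc_neg_one_pow_mul_choose_mul_sq {n t : ℕ} (hn : 3 ≤ n) (ht : 1 ≤ t) :
    ∑ i ∈ Icc (t + 1) n, (-1) ^ i * (n.choose i : ℤ) * i ^ 2 =
      (-1) ^ (t + 1) * (((n - 1).choose t : ℤ) * ((t : ℤ) + 1) ^ 2 -
        ((n - 2).choose t : ℤ) * (2 * (t : ℤ) + 1) - 2 * ((n - 3).choose (t - 1) : ℤ)) := by
  obtain ⟨m, rfl⟩ : ∃ m, n = m + 3 := ⟨n - 3, by omega⟩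
  obtain ⟨s, rfl⟩ : ∃ s, t = s + 1 := ⟨t - 1, by omega⟩
  have h2 := sum_Icc_neg_one_pow_mul_choose_succ_mul (N := m + 2) (M := m + 3) (by omega) (s + 1)
    (g := fun i => (i : ℤ) ^ 2) (h := fun i => 2 * i + 1) (fun i => by push_cast; ring)
  have h1 := sum_Icc_neg_one_pow_mul_choose_succ_mul (N := m + 1) (M := m + 3) (by omega) (s + 1)
    (g := fun i => 2 * (i : ℤ) + 1) (h := fun _ => 2) (fun i => by push_cast; ring)
  have h0 := sum_Icc_neg_one_pow_mul_choose_succ (R := ℤ) (N := m) (M := m + 3) (by omega) (s + 1)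
  have pascal : ((m + 1).choose (s + 1) : ℤ) = m.choose s + m.choose (s + 1) := by
    exact_mod_cast Nat.choose_succ_succ' m s
  rw [← sum_mul] at h1
  simp only [Nat.add_sub_cancel]
  rw [h2, h1, h0]
  push_cast
  linear_combination -2 * (-1 : ℤ) ^ (s + 1 + 1) * pascal

theorem sum_mul_add_mul_add_sub_one {ι R : Type*} [CommRing R] (s : Finset ι) (w x : ι → R)
    (c : R) :
    ∑ i ∈ s, w i * ((x i + c) * (x i + c - 1)) =
      ∑ i ∈ s, w i * x i ^ 2 + (2 * c - 1) * ∑ i ∈ s, w i * x i + (c ^ 2 - c) * ∑ i ∈ s, w i := by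
  simp only [mul_sum, ← sum_add_distrib]
  exact sum_congr rfl fun i _ => by ring

theorem sum_add_mul_add_sub_one {ι R : Type*} [CommRing R] (s : Finset ι) (x : ι → R) (c : R) :
    ∑ i ∈ s, (x i + c) * (x i + c - 1) =
      ∑ i ∈ s, x i ^ 2 + (2 * c - 1) * ∑ i ∈ s, x i + (c ^ 2 - c) * s.card := by
  simpa using sum_mul_add_mul_add_sub_one s 1 x c

theorem hasSecondDerivAt_hilbQ_one (n t : ℕ) (c d : ℤ) (p q : ℕ) (a : Fin p → ℤ) (b : Fin q → ℤ) :
    HasSecondDerivAt (hilbQ n t c d p q a b)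
      ((-(n : ℤ) * (n - 1 + c - d) * (n - 1 + c - d - 1) + (n + c - d) * (n + c - d - 1)
        + ∑ i, (b i + c) * (b i + c - 1) - ∑ i, (a i + c) * (a i + c - 1)
        + (-1) ^ t * ∑ i ∈ Icc (t + 1) n, (-1) ^ i * (n.choose i : ℤ) * ((i + c) * (i + c - 1))
          : ℤ) : ℝ) 1 := by
  have hmerge : hilbQ n t c d p q a b =ᶠ[𝓝 1] fun x =>
      1 - (n : ℝ) * x ^ ((n : ℤ) - 1 + c - d) + x ^ ((n : ℤ) + c - d)
        + ∑ i, x ^ (b i + c) - ∑ i, x ^ (a i + c)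
        + ∑ i ∈ Icc (t + 1) n, (-1 : ℝ) ^ t * (-1) ^ i * n.choose i * x ^ ((i : ℤ) + c) := by
    filter_upwards [eventually_ne_nhds one_ne_zero] with x hx
    simp only [hilbQ, mul_sum, zpow_add₀ hx]
    congr 1
    exact sum_congr rfl fun i _ => by ring
  have hzpow (k : ℤ) := hasSecondDerivAt_zpow (𝕜 := ℝ) k one_ne_zero
  refine HasSecondDerivAt.congr_of_eventuallyEq ?_ hmerge
  convert (((((hasSecondDerivAt_const 1 1).sub ((hzpow _).const_mul _)).add (hzpow _)).add
    (.sum (f := fun i y => y ^ (b i + c)) fun i _ => hzpow _)).sub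
    (.sum (f := fun i y => y ^ (a i + c)) fun i _ => hzpow _)).add
    (.sum (f := fun (i : ℕ) y => (-1 : ℝ) ^ t * (-1) ^ i * n.choose i * y ^ ((i : ℤ) + c))
      fun i _ => (hzpow _).const_mul _) using 1
  push_cast
  simp only [one_zpow, mul_one, mul_sum]
  ring_nf

theorem stmt_11_general (n t : ℕ) (c d : ℤ) (p q : ℕ) (a : Fin p → ℤ) (b : Fin q → ℤ)
    (hn : 3 ≤ n) (ht : 1 ≤ t)
    (hq : q = p + (n - 1).choose t + n - 2)
    (h1 : (∑ i, b i) - (∑ i, a i) =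
      (n : ℤ) ^ 2 - (2 + d) * n + c + d + ((n - 2).choose (t - 1) : ℤ) +
        ((n - 1).choose t : ℤ) * t) :
    deriv (deriv (hilbQ n t c d p q a b)) 1 = 0 ↔
      (∑ i, (b i) ^ 2) - (∑ i, (a i) ^ 2) =
        (n : ℤ) ^ 3 - (3 + 2 * d) * (n : ℤ) ^ 2 + (d ^ 2 + 4 * d + 1) * n - c ^ 2 - d ^ 2 +
          ((n - 1).choose t : ℤ) * ((t : ℤ) + 1) ^ 2 -
          ((n - 2).choose t : ℤ) * (2 * (t : ℤ) + 1) -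
          2 * ((n - 3).choose (t - 1) : ℤ) := by
  have hqp : (q : ℤ) - p = (n - 1).choose t + n - 2 := by omega
  have hsign : (-1 : ℤ) ^ t * (-1) ^ (t + 1) = -1 := by
    rw [← pow_add]; exact Odd.neg_one_pow ⟨t, by ring⟩
  rw [(hasSecondDerivAt_hilbQ_one n t c d p q a b).deriv_deriv, Int.cast_eq_zero,
    sum_add_mul_add_sub_one, sum_add_mul_add_sub_one, sum_mul_add_mul_add_sub_one,
    sum_Icc_neg_one_pow_mul_choose_mul_sq hn ht, sum_Icc_neg_one_pow_mul_choose_mul (by omega) ht,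
    sum_Icc_neg_one_pow_mul_choose (by omega), ← sub_eq_zero (a := ∑ i, b i ^ 2 - _)]
  simp only [card_univ, Fintype.card_fin]
  refine Iff.of_eq (congrArg (· = 0) ?_)
  linear_combination (2 * c - 1) * h1 + (c ^ 2 - c) * hqp +
    ((n - 1).choose t * ((t : ℤ) + 1) ^ 2 - (n - 2).choose t * (2 * (t : ℤ) + 1) -
      2 * (n - 3).choose (t - 1) + (2 * c - 1) * ((n - 2).choose (t - 1) + (n - 1).choose t * t) +
      (c ^ 2 - c) * (n - 1).choose t) * hsign

/-- With `q = p + C(n−1,t) + n − 2` and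
`Σ b_i − Σ a_i = n² − (2+d)n + c + d + C(n−2,t−1) + C(n−1,t)t`, one has `Q''(1) = 0` iff
`Σ b_i² − Σ a_i² = n³ − (3+2d)n² + (d²+4d+1)n − c² − d² + C(n−1,t)(t+1)²
  − C(n−2,t)(2t+1) − 2C(n−3,t−1)`. -/
theorem stmt_11 (n t : ℕ) (c d : ℤ) (p q : ℕ) (a : Fin p → ℤ) (b : Fin q → ℤ)
    (hn : 3 ≤ n) (ht : 1 ≤ t) (htn : t ≤ n - 1)
    (hq : q = p + (n - 1).choose t + n - 2)
    (h1 : (∑ i, b i) - (∑ i, a i) =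
      (n : ℤ) ^ 2 - (2 + d) * n + c + d + ((n - 2).choose (t - 1) : ℤ) +
        ((n - 1).choose t : ℤ) * t) :
    deriv (deriv (hilbQ n t c d p q a b)) 1 = 0 ↔
      (∑ i, (b i) ^ 2) - (∑ i, (a i) ^ 2) =
        (n : ℤ) ^ 3 - (3 + 2 * d) * (n : ℤ) ^ 2 + (d ^ 2 + 4 * d + 1) * n - c ^ 2 - d ^ 2 +
          ((n - 1).choose t : ℤ) * ((t : ℤ) + 1) ^ 2 -
          ((n - 2).choose t : ℤ) * (2 * (t : ℤ) + 1) -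
          2 * ((n - 3).choose (t - 1) : ℤ) :=
  stmt_11_general n t c d p q a b hn ht hq h1
end

section
/- Let S = K[x_1,...,x_6] and let g : S(−2)^6 → Λ²S^6 be the map sending generators m_1,...,m_6 to e_{12}, e_{13}, e_{23}, e_{45}, e_{46}, e_{56} respectively. Then the kernel of the composite ∂_2 ∘ g : S(−2)^6 → S^6 is the free submodule generated by the two elements x_3 m_1 − x_2 m_2 + x_1 m_3 and x_6 m_4 − x_5 m_5 + x_4 m_6, and this kernel is free of rank 2. -/
/-!
`exComposite` is the direct sum of two copies of the Koszul differential `Λ²S³ → S³`, one for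
`x₁, x₂, x₃` and one for `x₄, x₅, x₆`. In the first block a cycle `(a, b, c)` satisfies
`a x₁ = c x₃`, so the prime `x₃`, which does not divide `x₁`, divides `a`; cancelling `x₃` in the
remaining relations gives `(a, b, c) = p (x₃, −x₂, x₁)`. The two resulting syzygies have disjoint
supports, hence are linearly independent and form a basis of the kernel.
-/

open MvPolynomial

noncomputable section

/-- The basis vector `x·e_i` of `K_1 = S^6`. -/
def sgl (K : Type) [Field K] (i : Fin 6) (x : MvPolynomial (Fin 6) K) :
    Fin 6 → MvPolynomial (Fin 6) K :=
  Pi.single i x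

/-- The images `∂_2(e_{12}), ∂_2(e_{13}), ∂_2(e_{23}), ∂_2(e_{45}), ∂_2(e_{46}),
∂_2(e_{56})` of the six generators `m_1,…,m_6` under `∂_2 ∘ g`, where
`∂_2(e_{ij}) = x_i e_j − x_j e_i` (variables indexed `0,…,5`). -/
def exImages (K : Type) [Field K] : Fin 6 → (Fin 6 → MvPolynomial (Fin 6) K) :=
  ![sgl K 1 (X 0) - sgl K 0 (X 1),
    sgl K 2 (X 0) - sgl K 0 (X 2),
    sgl K 2 (X 1) - sgl K 1 (X 2),
    sgl K 4 (X 3) - sgl K 3 (X 4),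
    sgl K 5 (X 3) - sgl K 3 (X 5),
    sgl K 5 (X 4) - sgl K 4 (X 5)]

/-- The composite `∂_2 ∘ g : S(−2)^6 → S^6`, sending the generator `m_k` to
`∂_2(β_k)` for `β_1,…,β_6 = e_{12}, e_{13}, e_{23}, e_{45}, e_{46}, e_{56}`. -/
def exComposite (K : Type) [Field K] :
    (Fin 6 → MvPolynomial (Fin 6) K) →ₗ[MvPolynomial (Fin 6) K]
      (Fin 6 → MvPolynomial (Fin 6) K) :=
  ∑ k : Fin 6, (LinearMap.proj k).smulRight (exImages K k)

theorem exists_eq_mul_of_koszul_relations {R : Type*} [CommRing R] [IsDomain R]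
    {x y z a b c : R} (hz : Prime z) (hzx : ¬ z ∣ x)
    (hy : a * y + b * z = 0) (hx : a * x = c * z) :
    ∃ p, a = z * p ∧ b = -(y * p) ∧ c = x * p := by
  obtain ⟨p, rfl⟩ : z ∣ a :=
    (hz.dvd_or_dvd ⟨c, by rw [hx, mul_comm]⟩).resolve_right hzx
  refine ⟨p, rfl, ?_, ?_⟩ <;> apply mul_right_cancel₀ hz.ne_zero
  · linear_combination hy
  · linear_combination -hx

section

variable (K : Type) [Field K]

def syzygyLeft : Fin 6 → MvPolynomial (Fin 6) K :=
  ![X 2, -X 1, X 0, 0, 0, 0]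

def syzygyRight : Fin 6 → MvPolynomial (Fin 6) K :=
  ![0, 0, 0, X 5, -X 4, X 3]

theorem sgl_sub_add_eq_syzygyLeft :
    sgl K 0 (X 2) - sgl K 1 (X 1) + sgl K 2 (X 0) = syzygyLeft K := by
  funext j
  fin_cases j <;> simp [sgl, syzygyLeft]

theorem sgl_sub_add_eq_syzygyRight :
    sgl K 3 (X 5) - sgl K 4 (X 4) + sgl K 5 (X 3) = syzygyRight K := by
  funext j
  fin_cases j <;> simp [sgl, syzygyRight]

theorem exComposite_apply (a : Fin 6 → MvPolynomial (Fin 6) K) :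
    exComposite K a =
      ![-(a 0 * X 1 + a 1 * X 2), a 0 * X 0 - a 2 * X 2, a 1 * X 0 + a 2 * X 1,
        -(a 3 * X 4 + a 4 * X 5), a 3 * X 3 - a 5 * X 5, a 4 * X 3 + a 5 * X 4] := by
  funext j
  fin_cases j <;> simp [exComposite, exImages, sgl, Fin.sum_univ_six]
  all_goals ring

theorem ker_exComposite :
    LinearMap.ker (exComposite K) =
      Submodule.span (MvPolynomial (Fin 6) K) {syzygyLeft K, syzygyRight K} := by
  ext a
  rw [LinearMap.mem_ker, exComposite_apply, Submodule.mem_span_pair]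
  constructor
  · intro h
    simp only [Matrix.cons_eq_zero_iff, neg_eq_zero, sub_eq_zero] at h
    obtain ⟨h0, h1, -, h3, h4, -⟩ := h
    obtain ⟨p, hp0, hp1, hp2⟩ :=
      exists_eq_mul_of_koszul_relations (X_prime (i := 2)) (by simp) h0 h1
    obtain ⟨q, hq3, hq4, hq5⟩ :=
      exists_eq_mul_of_koszul_relations (X_prime (i := 5)) (by simp) h3 h4
    refine ⟨p, q, funext fun j ↦ ?_⟩
    fin_cases j <;> simp [syzygyLeft, syzygyRight, *, mul_comm]
  · rintro ⟨p, q, rfl⟩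
    funext j
    fin_cases j <;> simp [syzygyLeft, syzygyRight]
    all_goals ring

theorem linearIndependent_syzygies :
    LinearIndependent (MvPolynomial (Fin 6) K) ![syzygyLeft K, syzygyRight K] := by
  refine LinearIndependent.pair_iff.mpr fun s t h ↦ ⟨?_, ?_⟩
  · simpa [syzygyLeft, syzygyRight] using congrFun h 0
  · simpa [syzygyLeft, syzygyRight] using congrFun h 3

end

/-- The kernel of `∂_2 ∘ g : S(−2)^6 → S^6` is the free submodule generated by
`x_3 m_1 − x_2 m_2 + x_1 m_3` and `x_6 m_4 − x_5 m_5 + x_4 m_6`, and it is free of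
rank `2`. -/
theorem stmt_15 (K : Type) [Field K] :
    LinearMap.ker (exComposite K) =
        Submodule.span (MvPolynomial (Fin 6) K)
          {sgl K 0 (X 2) - sgl K 1 (X 1) + sgl K 2 (X 0),
            sgl K 3 (X 5) - sgl K 4 (X 4) + sgl K 5 (X 3)} ∧
      Module.Free (MvPolynomial (Fin 6) K) (LinearMap.ker (exComposite K)) ∧
      Module.rank (MvPolynomial (Fin 6) K) (LinearMap.ker (exComposite K)) = 2 := by
  have hli := linearIndependent_syzygies K
  have hker : LinearMap.ker (exComposite K) =
      Submodule.span _ (Set.range ![syzygyLeft K, syzygyRight K]) := by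
    rw [Matrix.range_cons_cons_empty, ker_exComposite]
  refine ⟨?_, ?_, ?_⟩
  · rw [ker_exComposite, sgl_sub_add_eq_syzygyLeft, sgl_sub_add_eq_syzygyRight]
  · rw [hker]
    exact Module.Free.of_basis (Module.Basis.span hli)
  · rw [hker, rank_span hli, Cardinal.mk_range_eq _ hli.injective]
    simp

end
end

section
/- Let S = K[x_1,...,x_6] and I = (x_1,x_2,x_3)(x_4,x_5,x_6). There is an exact sequence 0 → S(−3)² → S(−2)^6 → E_2 → I → 0 of graded S-modules, where E_2 is the second Koszul syzygy of K over S. -/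
open MvPolynomial Finset

noncomputable section

/-- The boundary of the Koszul basis element `e_J` of the Koszul complex of
`x_1,…,x_n` over `S = K[x_1,…,x_n]`, written in the exterior-algebra basis indexed by
subsets of `{1,…,n}`:  `∂ e_{j_1 < … < j_k} = Σ_i (-1)^{i+1} x_{j_i} e_{J∖{j_i}}`. -/
def koszulBdryElem (K : Type) [Field K] (n : ℕ) (J : Finset (Fin n)) :
    Finset (Fin n) → MvPolynomial (Fin n) K := fun T =>
  ∑ j ∈ J, if T = J.erase j then
    (-1 : MvPolynomial (Fin n) K) ^ (J.filter (fun k => k < j)).card * X j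
  else 0

/-- The Koszul differential, as a single endomorphism of
`⊕_i K_i = (Finset (Fin n) → S)`, the direct sum of all the (free) Koszul modules
`K_i = Λ^i S^n` with bases indexed by the `i`-element subsets of `{1,…,n}`. -/
def koszulD (K : Type) [Field K] (n : ℕ) :
    (Finset (Fin n) → MvPolynomial (Fin n) K) →ₗ[MvPolynomial (Fin n) K]
      (Finset (Fin n) → MvPolynomial (Fin n) K) :=
  ∑ J : Finset (Fin n), (LinearMap.proj J).smulRight (koszulBdryElem K n J)

/-- The `i`-th Koszul module `K_i = Λ^i S^n`, as the submodule of
`Finset (Fin n) → S` of functions supported on the `i`-element subsets. -/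
def koszulPart (K : Type) [Field K] (n i : ℕ) :
    Submodule (MvPolynomial (Fin n) K) (Finset (Fin n) → MvPolynomial (Fin n) K) :=
  Submodule.pi {T | T.card ≠ i} (fun _ => ⊥)

/-- The `t`-th Koszul syzygy module `E_t = ∂_t(K_t) = im(∂_t : K_t → K_{t-1})` of the
residue field `K` over `S = K[x_1,…,x_n]`. -/
def koszulSyzygy (K : Type) [Field K] (n t : ℕ) :
    Submodule (MvPolynomial (Fin n) K) (Finset (Fin n) → MvPolynomial (Fin n) K) :=
  Submodule.map (koszulD K n) (koszulPart K n t)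

end

noncomputable section Aux
variable {K : Type} [Field K]
local notation "S" => MvPolynomial (Fin 6) K

lemma mem_span_X_of_mul (iv : Fin 6) (s : Set (Fin 6)) (hs : iv ∉ s) (p : S)
    (h : X iv * p ∈ Ideal.span (X '' s : Set S)) : p ∈ Ideal.span (X '' s) := by
  rw [mem_ideal_span_X_image] at h ⊢
  intro m hm
  have hm' : (Finsupp.single iv 1 + m) ∈ (X iv * p).support := by
    rw [support_X_mul]
    exact Finset.mem_map_of_mem _ hm
  obtain ⟨l, hl, hne⟩ := h _ hm'
  refine ⟨l, hl, fun h0 => hne ?_⟩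
  rw [Finsupp.add_apply, h0, add_zero, Finsupp.single_apply,
    if_neg (by rintro rfl; exact hs hl)]

lemma X_dvd_of_X_mul {j k : Fin 6} (hjk : j ≠ k) (p : S) (hd : X k ∣ X j * p) :
    X k ∣ p := by
  have h : X j * p ∈ Ideal.span (X '' ({k} : Set (Fin 6)) : Set S) := by
    rw [Set.image_singleton]
    exact Ideal.mem_span_singleton.2 hd
  have := mem_span_X_of_mul j {k} (by simpa using hjk) p h
  rw [Set.image_singleton, Ideal.mem_span_singleton] at this
  exact this

lemma mem_span_pair_of_mul {i j k : Fin 6} (hij : i ≠ j) (hik : i ≠ k) (p : S)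
    (h : X i * p ∈ Ideal.span ({X j, X k} : Set S)) :
    p ∈ Ideal.span ({X j, X k} : Set S) := by
  have him : ({X j, X k} : Set S) = X '' ({j, k} : Set (Fin 6)) := by
    rw [Set.image_insert_eq, Set.image_singleton]
  rw [him] at h ⊢
  exact mem_span_X_of_mul i _ (by simp [hij, hik]) p h

lemma star {i j k : Fin 6} (hij : i ≠ j) (hik : i ≠ k) (hjk : j ≠ k)
    (A B C : S) (h : A * X i + B * X j + C * X k = 0) :
    ∃ p q r : S, A = p * X j + q * X k ∧ B = -(p * X i) + r * X k ∧
      C = -(q * X i) - r * X j := by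
  have hA : A ∈ Ideal.span ({X j, X k} : Set S) := by
    refine mem_span_pair_of_mul hij hik A (Ideal.mem_span_pair.2 ⟨-B, -C, ?_⟩)
    linear_combination -h
  obtain ⟨p, q, hpq⟩ := Ideal.mem_span_pair.1 hA
  have hB : X k ∣ X j * (B + p * X i) := ⟨-(C + q * X i), by linear_combination h + X i * hpq⟩
  obtain ⟨r, hr⟩ := X_dvd_of_X_mul hjk _ hB
  have hC : X k * (C + q * X i + r * X j) = 0 := by linear_combination h + X i * hpq - X j * hr
  have hC0 : C + q * X i + r * X j = 0 := by
    rcases mul_eq_zero.1 hC with h' | h'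
    · exact absurd h' (X_ne_zero _)
    · exact h'
  exact ⟨p, q, r, hpq.symm, by linear_combination hr, by linear_combination hC0⟩


/-- Explicit form of the Koszul boundary of `e_{ij}` (`i < j`). -/
def dd (K : Type) [Field K] (i j : Fin 6) :
    Finset (Fin 6) → MvPolynomial (Fin 6) K := fun T =>
  if T = {j} then X i else if T = {i} then - X j else 0

lemma koszulD_apply (n : ℕ) (v : Finset (Fin n) → MvPolynomial (Fin n) K)
    (T : Finset (Fin n)) :
    koszulD K n v T = ∑ J : Finset (Fin n), v J * koszulBdryElem K n J T := by
  simp [koszulD, LinearMap.sum_apply, Finset.sum_apply, LinearMap.smulRight_apply]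

lemma bdry_pair {i j : Fin 6} (h : i < j) :
    koszulBdryElem K 6 {i, j} = dd K i j := by
  have hne : i ≠ j := h.ne
  funext T
  have e1 : ({i, j} : Finset (Fin 6)).erase i = {j} := by
    rw [show ({i,j} : Finset (Fin 6)) = insert i {j} from rfl,
      Finset.erase_insert (by simp [hne])]
  have e2 : ({i, j} : Finset (Fin 6)).erase j = {i} := by
    rw [Finset.pair_comm, show ({j,i} : Finset (Fin 6)) = insert j {i} from rfl,
      Finset.erase_insert (by simp [hne.symm])]
  have f1 : ({i, j} : Finset (Fin 6)).filter (fun k => k < i) = ∅ := by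
    ext k
    simp only [Finset.mem_filter, Finset.mem_insert, Finset.mem_singleton,
      Finset.notMem_empty, iff_false, not_and]
    rintro (rfl | rfl)
    · exact lt_irrefl _
    · exact fun hk => absurd hk (asymm h)
  have f2 : ({i, j} : Finset (Fin 6)).filter (fun k => k < j) = {i} := by
    ext k
    simp only [Finset.mem_filter, Finset.mem_insert, Finset.mem_singleton]
    constructor
    · rintro ⟨rfl | rfl, hk⟩
      · rfl
      · exact absurd hk (lt_irrefl _)
    · rintro rfl
      exact ⟨Or.inl rfl, h⟩
  show (∑ l ∈ ({i,j} : Finset (Fin 6)), _) = _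
  rw [show ({i,j} : Finset (Fin 6)) = insert i {j} from rfl,
    Finset.sum_insert (by simp [hne]), Finset.sum_singleton]
  rw [show (insert i {j} : Finset (Fin 6)) = {i,j} from rfl, e1, e2, f1, f2]
  by_cases h1 : T = {j}
  · have h2 : T ≠ {i} := by
      rw [h1]; simp only [ne_eq, Finset.singleton_inj]; exact hne.symm
    simp [dd, h1, h2, hne, hne.symm]
  · by_cases h2 : T = {i}
    · simp [dd, h1, h2, hne, hne.symm]
    · simp [dd, h1, h2, hne, hne.symm]

lemma single_mem_part {J : Finset (Fin 6)} (hJ : J.card = 2) :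
    Pi.single J (1 : S) ∈ koszulPart K 6 2 := by
  rw [koszulPart, Submodule.mem_pi]
  intro T hT
  rw [Submodule.mem_bot]
  exact Pi.single_eq_of_ne (fun h => hT (by rw [h]; exact hJ)) _

lemma koszulD_single (J : Finset (Fin 6)) :
    koszulD K 6 (Pi.single J (1 : S)) = koszulBdryElem K 6 J := by
  funext T
  rw [koszulD_apply]
  rw [Fintype.sum_eq_single J (fun J' hJ' => by simp [Pi.single_eq_of_ne hJ'])]
  simp

lemma dd_mem {i j : Fin 6} (h : i < j) : dd K i j ∈ koszulSyzygy K 6 2 := by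
  refine Submodule.mem_map.2 ⟨Pi.single {i,j} 1, single_mem_part ?_, ?_⟩
  · rw [Finset.card_insert_of_notMem (by simp [h.ne]), Finset.card_singleton]
  · rw [koszulD_single, bdry_pair h]

lemma mem_syzygy_iff (v : Finset (Fin 6) → S) :
    v ∈ koszulSyzygy K 6 2 ↔ ∃ w : Finset (Fin 6) → S,
      (∀ T, T.card ≠ 2 → w T = 0) ∧ koszulD K 6 w = v := by
  rw [koszulSyzygy, Submodule.mem_map]
  constructor
  · rintro ⟨w, hw, rfl⟩
    exact ⟨w, fun T hT => (Submodule.mem_bot S).1 (Submodule.mem_pi.1 hw T hT), rfl⟩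
  · rintro ⟨w, hw, rfl⟩
    exact ⟨w, Submodule.mem_pi.2 (fun T hT => (Submodule.mem_bot S).2 (hw T hT)), rfl⟩

lemma bdry_apply_ne {J : Finset (Fin 6)} (hJ : J.card = 2) {T : Finset (Fin 6)}
    (hT : T.card ≠ 1) : koszulBdryElem K 6 J T = 0 := by
  apply Finset.sum_eq_zero
  intro j hj
  rw [if_neg]
  intro hTe
  exact hT (by rw [hTe, Finset.card_erase_of_mem hj, hJ])

lemma syz_supp {v : Finset (Fin 6) → S} (hv : v ∈ koszulSyzygy K 6 2)
    {T : Finset (Fin 6)} (hT : T.card ≠ 1) : v T = 0 := by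
  obtain ⟨w, hw, rfl⟩ := (mem_syzygy_iff v).1 hv
  rw [koszulD_apply]
  apply Finset.sum_eq_zero
  intro J _
  by_cases hJ : J.card = 2
  · rw [bdry_apply_ne hJ hT, mul_zero]
  · rw [hw J hJ, zero_mul]


lemma dd_single (i j t : Fin 6) :
    dd K i j {t} = if t = j then X i else if t = i then - X j else 0 := by
  simp only [dd, Finset.singleton_inj]

lemma dd_nonsingle (i j : Fin 6) {T : Finset (Fin 6)} (hT : T.card ≠ 1) :
    dd K i j T = 0 := by
  simp only [dd]
  rw [if_neg (fun h => hT (by rw [h, Finset.card_singleton])),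
    if_neg (fun h => hT (by rw [h, Finset.card_singleton]))]

lemma sum_X_dd {i j : Fin 6} (h : i < j) :
    ∑ t : Fin 6, X t * dd K i j {t} = 0 := by
  have key : ∀ t : Fin 6, X t * dd K i j {t} =
      (if t = j then X j * X i else 0) + (if t = i then -(X i * X j) else 0) := by
    intro t
    rw [dd_single]
    by_cases h1 : t = j
    · subst h1
      rw [if_pos rfl, if_pos rfl, if_neg h.ne', add_zero]
    · by_cases h2 : t = i
      · subst h2
        rw [if_neg h1, if_neg h1, if_pos rfl, if_pos rfl, zero_add]
        ring
      · rw [if_neg h1, if_neg h1, if_neg h2, if_neg h2, mul_zero, add_zero]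
  rw [Finset.sum_congr rfl (fun t _ => key t), Finset.sum_add_distrib,
    Finset.sum_ite_eq' Finset.univ j (fun _ => X j * X i),
    Finset.sum_ite_eq' Finset.univ i (fun _ => -(X i * X j))]
  simp only [Finset.mem_univ, if_pos]
  ring

lemma inner_sum_zero {J : Finset (Fin 6)} (hJ : J.card = 2) :
    ∑ t : Fin 6, X t * koszulBdryElem K 6 J {t} = 0 := by
  obtain ⟨a, b, hab, rfl⟩ := Finset.card_eq_two.1 hJ
  rcases hab.lt_or_gt with hl | hl
  · rw [bdry_pair hl]; exact sum_X_dd hl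
  · rw [Finset.pair_comm, bdry_pair hl]; exact sum_X_dd hl

lemma syz_sum {v : Finset (Fin 6) → S} (hv : v ∈ koszulSyzygy K 6 2) :
    ∑ t : Fin 6, X t * v {t} = 0 := by
  obtain ⟨w, hw, rfl⟩ := (mem_syzygy_iff v).1 hv
  have : ∀ t : Fin 6, X t * koszulD K 6 w {t}
      = ∑ J : Finset (Fin 6), w J * (X t * koszulBdryElem K 6 J {t}) := by
    intro t
    rw [koszulD_apply, Finset.mul_sum]
    exact Finset.sum_congr rfl (fun J _ => by ring)
  rw [Finset.sum_congr rfl (fun t _ => this t), Finset.sum_comm]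
  apply Finset.sum_eq_zero
  intro J _
  by_cases hJ : J.card = 2
  · rw [← Finset.mul_sum, inner_sum_zero hJ, mul_zero]
  · rw [Finset.sum_eq_zero (fun t _ => by rw [hw J hJ, zero_mul])]


lemma phi_dd_mem {i j : Fin 6} (h : i < j) :
    X 3 * dd K i j {3} + X 4 * dd K i j {4} + X 5 * dd K i j {5} ∈
      Ideal.span ({X 0, X 1, X 2} : Set S) * Ideal.span ({X 3, X 4, X 5} : Set S) := by
  have h' : (i : ℕ) < (j : ℕ) := h
  by_cases hj : (j : ℕ) < 3
  · have hz : ∀ t : Fin 6, 3 ≤ (t : ℕ) → dd K i j {t} = 0 := by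
      intro t ht
      rw [dd_single, if_neg, if_neg]
      · intro he; rw [he] at ht; omega
      · intro he; rw [he] at ht; omega
    rw [hz 3 (by decide), hz 4 (by decide), hz 5 (by decide)]
    simp
  · by_cases hi : (i : ℕ) < 3
    · have hti : ∀ t : Fin 6, 3 ≤ (t : ℕ) →
          dd K i j {t} = if t = j then X i else 0 := by
        intro t ht
        rw [dd_single]
        by_cases h1 : t = j
        · rw [if_pos h1, if_pos h1]
        · rw [if_neg h1, if_neg h1, if_neg]
          intro he; rw [he] at ht; omega
      have hXi : (X i : S) ∈ Ideal.span ({X 0, X 1, X 2} : Set S) := by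
        apply Ideal.subset_span
        have hlow : ∀ a : Fin 6, (a : ℕ) < 3 → a = 0 ∨ a = 1 ∨ a = 2 := by decide
        rcases hlow i hi with rfl | rfl | rfl <;> simp
      have hXj : (X j : S) ∈ Ideal.span ({X 3, X 4, X 5} : Set S) := by
        apply Ideal.subset_span
        have hhigh : ∀ a : Fin 6, ¬ (a : ℕ) < 3 → a = 3 ∨ a = 4 ∨ a = 5 := by decide
        rcases hhigh j hj with rfl | rfl | rfl <;> simp
      rw [hti 3 (by decide), hti 4 (by decide), hti 5 (by decide)]
      have hhigh : ∀ a : Fin 6, ¬ (a : ℕ) < 3 → a = 3 ∨ a = 4 ∨ a = 5 := by decide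
      rcases hhigh j hj with rfl | rfl | rfl
      · have e : X 3 * (if (3 : Fin 6) = 3 then (X i : S) else 0)
            + X 4 * (if (4 : Fin 6) = 3 then X i else 0)
            + X 5 * (if (5 : Fin 6) = 3 then X i else 0) = X i * X 3 := by
          rw [if_pos rfl, if_neg (by decide), if_neg (by decide)]; ring
        rw [e]; exact Ideal.mul_mem_mul hXi hXj
      · have e : X 3 * (if (3 : Fin 6) = 4 then (X i : S) else 0)
            + X 4 * (if (4 : Fin 6) = 4 then X i else 0)
            + X 5 * (if (5 : Fin 6) = 4 then X i else 0) = X i * X 4 := by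
          rw [if_neg (by decide), if_pos rfl, if_neg (by decide)]; ring
        rw [e]; exact Ideal.mul_mem_mul hXi hXj
      · have e : X 3 * (if (3 : Fin 6) = 5 then (X i : S) else 0)
            + X 4 * (if (4 : Fin 6) = 5 then X i else 0)
            + X 5 * (if (5 : Fin 6) = 5 then X i else 0) = X i * X 5 := by
          rw [if_neg (by decide), if_neg (by decide), if_pos rfl]; ring
        rw [e]; exact Ideal.mul_mem_mul hXi hXj
    · have hpairs : ∀ a b : Fin 6, (a : ℕ) < (b : ℕ) → ¬ (b : ℕ) < 3 → ¬ (a : ℕ) < 3 →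
          (a = 3 ∧ b = 4) ∨ (a = 3 ∧ b = 5) ∨ (a = 4 ∧ b = 5) := by decide
      rcases hpairs i j h' hj hi with ⟨rfl, rfl⟩ | ⟨rfl, rfl⟩ | ⟨rfl, rfl⟩
      · have e : X 3 * dd K 3 4 {3} + X 4 * dd K 3 4 {4} + X 5 * dd K 3 4 {5} = (0 : S) := by
          rw [dd_single, dd_single, dd_single,
            if_neg (by decide), if_pos rfl, if_pos rfl, if_neg (by decide), if_neg (by decide)]
          ring
        rw [e]; exact zero_mem _
      · have e : X 3 * dd K 3 5 {3} + X 4 * dd K 3 5 {4} + X 5 * dd K 3 5 {5} = (0 : S) := by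
          rw [dd_single, dd_single, dd_single,
            if_neg (by decide), if_pos rfl, if_neg (by decide), if_neg (by decide), if_pos rfl]
          ring
        rw [e]; exact zero_mem _
      · have e : X 3 * dd K 4 5 {3} + X 4 * dd K 4 5 {4} + X 5 * dd K 4 5 {5} = (0 : S) := by
          rw [dd_single, dd_single, dd_single,
            if_neg (by decide), if_neg (by decide), if_neg (by decide), if_pos rfl, if_pos rfl]
          ring
        rw [e]; exact zero_mem _

lemma phi_bdry_mem {J : Finset (Fin 6)} (hJ : J.card = 2) :
    X 3 * koszulBdryElem K 6 J {3} + X 4 * koszulBdryElem K 6 J {4}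
      + X 5 * koszulBdryElem K 6 J {5} ∈
      Ideal.span ({X 0, X 1, X 2} : Set S) * Ideal.span ({X 3, X 4, X 5} : Set S) := by
  obtain ⟨a, b, hab, rfl⟩ := Finset.card_eq_two.1 hJ
  rcases hab.lt_or_gt with hl | hl
  · rw [bdry_pair hl]; exact phi_dd_mem hl
  · rw [Finset.pair_comm, bdry_pair hl]; exact phi_dd_mem hl

lemma syz_phi {v : Finset (Fin 6) → S} (hv : v ∈ koszulSyzygy K 6 2) :
    X 3 * v {3} + X 4 * v {4} + X 5 * v {5} ∈
      Ideal.span ({X 0, X 1, X 2} : Set S) * Ideal.span ({X 3, X 4, X 5} : Set S) := by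
  obtain ⟨w, hw, rfl⟩ := (mem_syzygy_iff v).1 hv
  have e : X 3 * koszulD K 6 w {3} + X 4 * koszulD K 6 w {4} + X 5 * koszulD K 6 w {5}
      = ∑ J : Finset (Fin 6), w J * (X 3 * koszulBdryElem K 6 J {3}
          + X 4 * koszulBdryElem K 6 J {4} + X 5 * koszulBdryElem K 6 J {5}) := by
    rw [koszulD_apply, koszulD_apply, koszulD_apply, Finset.mul_sum, Finset.mul_sum,
      Finset.mul_sum, ← Finset.sum_add_distrib, ← Finset.sum_add_distrib]
    exact Finset.sum_congr rfl (fun J _ => by ring)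
  rw [e]
  apply Ideal.sum_mem
  intro J _
  by_cases hJ : J.card = 2
  · exact Ideal.mul_mem_left _ _ (phi_bdry_mem hJ)
  · rw [hw J hJ, zero_mul]; exact zero_mem _


/-- The map `S^6 → K_1` sending the generators to the six "pure" Koszul relations. -/
def Gmap (K : Type) [Field K] :
    (Fin 6 → MvPolynomial (Fin 6) K) →ₗ[MvPolynomial (Fin 6) K]
      (Finset (Fin 6) → MvPolynomial (Fin 6) K) :=
  (LinearMap.proj 0).smulRight (dd K 0 1) + (LinearMap.proj 1).smulRight (dd K 0 2)
  + (LinearMap.proj 2).smulRight (dd K 1 2) + (LinearMap.proj 3).smulRight (dd K 3 4)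
  + (LinearMap.proj 4).smulRight (dd K 3 5) + (LinearMap.proj 5).smulRight (dd K 4 5)

lemma Gmap_apply (c : Fin 6 → S) (T : Finset (Fin 6)) :
    Gmap K c T = c 0 * dd K 0 1 T + c 1 * dd K 0 2 T + c 2 * dd K 1 2 T
      + c 3 * dd K 3 4 T + c 4 * dd K 3 5 T + c 5 * dd K 4 5 T := by
  simp [Gmap, LinearMap.add_apply, LinearMap.smulRight_apply, LinearMap.proj_apply,
    Pi.add_apply, Pi.smul_apply, smul_eq_mul]

lemma Gmap_mem (c : Fin 6 → S) : Gmap K c ∈ koszulSyzygy K 6 2 := by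
  have e : Gmap K c = c 0 • dd K 0 1 + c 1 • dd K 0 2 + c 2 • dd K 1 2
      + c 3 • dd K 3 4 + c 4 • dd K 3 5 + c 5 • dd K 4 5 := by
    funext T
    rw [Gmap_apply]
    simp [Pi.add_apply, Pi.smul_apply, smul_eq_mul]
  rw [e]
  refine add_mem (add_mem (add_mem (add_mem (add_mem ?_ ?_) ?_) ?_) ?_) ?_ <;>
    exact Submodule.smul_mem _ _ (dd_mem (by decide))

/-- The evaluation `v ↦ x_4 v_4 + x_5 v_5 + x_6 v_6`. -/
def phi0 (K : Type) [Field K] :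
    (Finset (Fin 6) → MvPolynomial (Fin 6) K) →ₗ[MvPolynomial (Fin 6) K]
      MvPolynomial (Fin 6) K :=
  (LinearMap.proj ({3} : Finset (Fin 6))).smulRight (X 3)
    + (LinearMap.proj ({4} : Finset (Fin 6))).smulRight (X 4)
    + (LinearMap.proj ({5} : Finset (Fin 6))).smulRight (X 5)

lemma phi0_apply (v : Finset (Fin 6) → S) :
    phi0 K v = X 3 * v {3} + X 4 * v {4} + X 5 * v {5} := by
  simp only [phi0, LinearMap.add_apply, LinearMap.smulRight_apply, LinearMap.proj_apply,
    smul_eq_mul]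
  ring

/-- First column of the syzygy matrix. -/
def uvec (K : Type) [Field K] : Fin 6 → MvPolynomial (Fin 6) K := fun t =>
  if t = 0 then X 2 else if t = 1 then - X 1 else if t = 2 then X 0 else 0

/-- Second column of the syzygy matrix. -/
def vvec (K : Type) [Field K] : Fin 6 → MvPolynomial (Fin 6) K := fun t =>
  if t = 3 then X 5 else if t = 4 then - X 4 else if t = 5 then X 3 else 0

/-- The map `S² → S^6` of second syzygies. -/
def fmap (K : Type) [Field K] :
    (Fin 2 → MvPolynomial (Fin 6) K) →ₗ[MvPolynomial (Fin 6) K]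
      (Fin 6 → MvPolynomial (Fin 6) K) :=
  (LinearMap.proj 0).smulRight (uvec K) + (LinearMap.proj 1).smulRight (vvec K)

lemma fmap_apply (c : Fin 2 → S) (t : Fin 6) :
    fmap K c t = c 0 * uvec K t + c 1 * vvec K t := by
  simp only [fmap, LinearMap.add_apply, LinearMap.smulRight_apply, LinearMap.proj_apply,
    Pi.add_apply, Pi.smul_apply, smul_eq_mul]


lemma kos_rel_low (T : Finset (Fin 6)) :
    X 2 * dd K 0 1 T - X 1 * dd K 0 2 T + X 0 * dd K 1 2 T = 0 := by
  by_cases hT : T.card = 1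
  · obtain ⟨t, rfl⟩ := Finset.card_eq_one.1 hT
    fin_cases t <;> simp [dd] <;> ring
  · rw [dd_nonsingle 0 1 hT, dd_nonsingle 0 2 hT, dd_nonsingle 1 2 hT]; ring

lemma kos_rel_high (T : Finset (Fin 6)) :
    X 5 * dd K 3 4 T - X 4 * dd K 3 5 T + X 3 * dd K 4 5 T = 0 := by
  by_cases hT : T.card = 1
  · obtain ⟨t, rfl⟩ := Finset.card_eq_one.1 hT
    fin_cases t <;> simp [dd] <;> ring
  · rw [dd_nonsingle 3 4 hT, dd_nonsingle 3 5 hT, dd_nonsingle 4 5 hT]; ring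

end Aux
open MvPolynomial in
/-- Let `S = K[x_1,…,x_6]` and `I = (x_1,x_2,x_3)(x_4,x_5,x_6)` (variables indexed
`0,…,5`).  There is an exact sequence `0 → S(−3)² → S(−2)^6 → E_2 → I → 0` of
`S`-modules, where `E_2 = im ∂_2` is the second Koszul syzygy of `K` over `S`:
i.e. there are `S`-linear maps `f : S² → S^6`, `g : S^6 → E_2`, `φ : E_2 → S` with
`f` injective, `im f = ker g`, `im g = ker φ`, and `im φ = I`. -/
theorem stmt_16 (K : Type) [Field K]
    (I : Ideal (MvPolynomial (Fin 6) K))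
    (hI : I = Ideal.span {X 0, X 1, X 2} * Ideal.span {X 3, X 4, X 5}) :
    ∃ (f : (Fin 2 → MvPolynomial (Fin 6) K) →ₗ[MvPolynomial (Fin 6) K]
        (Fin 6 → MvPolynomial (Fin 6) K))
      (g : (Fin 6 → MvPolynomial (Fin 6) K) →ₗ[MvPolynomial (Fin 6) K]
        (koszulSyzygy K 6 2))
      (φ : (koszulSyzygy K 6 2) →ₗ[MvPolynomial (Fin 6) K] MvPolynomial (Fin 6) K),
      Function.Injective f ∧
        LinearMap.range f = LinearMap.ker g ∧
        LinearMap.range g = LinearMap.ker φ ∧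
        (LinearMap.range φ : Ideal (MvPolynomial (Fin 6) K)) = I := by
  classical
  refine ⟨fmap K, (Gmap K).codRestrict (koszulSyzygy K 6 2) Gmap_mem,
    (phi0 K).comp (Submodule.subtype _), ?_, ?_, ?_, ?_⟩
  · -- injectivity of f
    intro a b hab
    have h0 : a 0 * X 2 = b 0 * X 2 := by
      have := congrFun hab 0
      rw [fmap_apply, fmap_apply] at this
      simpa [uvec, vvec] using this
    have h5 : a 1 * X 3 = b 1 * X 3 := by
      have := congrFun hab 5
      rw [fmap_apply, fmap_apply] at this
      simpa [uvec, vvec] using this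
    have e0 : a 0 = b 0 := mul_right_cancel₀ (X_ne_zero _) h0
    have e1 : a 1 = b 1 := mul_right_cancel₀ (X_ne_zero _) h5
    funext t
    fin_cases t
    · exact e0
    · exact e1
  · -- range f = ker g
    apply le_antisymm
    · rintro x ⟨a, rfl⟩
      rw [LinearMap.mem_ker]
      apply Subtype.ext
      show Gmap K (fmap K a) = 0
      funext T
      rw [Gmap_apply]
      simp [fmap_apply, uvec, vvec]
      linear_combination a 0 * kos_rel_low (K := K) T + a 1 * kos_rel_high (K := K) T
    · intro c hc
      rw [LinearMap.mem_ker] at hc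
      have hG : Gmap K c = 0 := congrArg Subtype.val hc
      have q : ∀ t : Fin 6, c 0 * dd K 0 1 {t} + c 1 * dd K 0 2 {t} + c 2 * dd K 1 2 {t}
          + c 3 * dd K 3 4 {t} + c 4 * dd K 3 5 {t} + c 5 * dd K 4 5 {t} = 0 := by
        intro t
        have := congrFun hG {t}
        rwa [Gmap_apply] at this
      have q0 : c 0 * X 1 + c 1 * X 2 = 0 := by
        have := q 0; simp [dd] at this; linear_combination -this
      have q1 : c 0 * X 0 - c 2 * X 2 = 0 := by
        have := q 1; simp [dd] at this; linear_combination this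
      have q2 : c 1 * X 0 + c 2 * X 1 = 0 := by
        have := q 2; simp [dd] at this; linear_combination this
      have q3 : c 3 * X 4 + c 4 * X 5 = 0 := by
        have := q 3; simp [dd] at this; linear_combination -this
      have q4 : c 3 * X 3 - c 5 * X 5 = 0 := by
        have := q 4; simp [dd] at this; linear_combination this
      have q5 : c 4 * X 3 + c 5 * X 4 = 0 := by
        have := q 5; simp [dd] at this; linear_combination this
      obtain ⟨a, ha⟩ : (X 0 : MvPolynomial (Fin 6) K) ∣ c 2 :=
        X_dvd_of_X_mul (show (2 : Fin 6) ≠ 0 by decide) _ ⟨c 0, by linear_combination -q1⟩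
      have hc1 : c 1 = -(a * X 1) := by
        have h' : X 0 * (c 1 + a * X 1) = 0 := by linear_combination q2 - X 1 * ha
        rcases mul_eq_zero.1 h' with h'' | h''
        · exact absurd h'' (X_ne_zero _)
        · linear_combination h''
      have hc0 : c 0 = a * X 2 := by
        have h' : X 1 * (c 0 - a * X 2) = 0 := by linear_combination q0 - X 2 * hc1
        rcases mul_eq_zero.1 h' with h'' | h''
        · exact absurd h'' (X_ne_zero _)
        · linear_combination h''
      obtain ⟨b, hb⟩ : (X 3 : MvPolynomial (Fin 6) K) ∣ c 5 :=
        X_dvd_of_X_mul (show (5 : Fin 6) ≠ 3 by decide) _ ⟨c 3, by linear_combination -q4⟩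
      have hc4 : c 4 = -(b * X 4) := by
        have h' : X 3 * (c 4 + b * X 4) = 0 := by linear_combination q5 - X 4 * hb
        rcases mul_eq_zero.1 h' with h'' | h''
        · exact absurd h'' (X_ne_zero _)
        · linear_combination h''
      have hc3 : c 3 = b * X 5 := by
        have h' : X 4 * (c 3 - b * X 5) = 0 := by linear_combination q3 - X 5 * hc4
        rcases mul_eq_zero.1 h' with h'' | h''
        · exact absurd h'' (X_ne_zero _)
        · linear_combination h''
      rw [LinearMap.mem_range]
      refine ⟨fun s => if s = 0 then a else b, funext fun t => ?_⟩
      rw [fmap_apply]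
      fin_cases t
      · simp [uvec, vvec]; linear_combination -hc0
      · simp [uvec, vvec]; linear_combination -hc1
      · simp [uvec, vvec]; linear_combination -ha
      · simp [uvec, vvec]; linear_combination -hc3
      · simp [uvec, vvec]; linear_combination -hc4
      · simp [uvec, vvec]; linear_combination -hb
  · -- range g = ker φ
    apply le_antisymm
    · rintro x ⟨c, rfl⟩
      rw [LinearMap.mem_ker]
      show phi0 K (Gmap K c) = 0
      rw [phi0_apply, Gmap_apply, Gmap_apply, Gmap_apply]
      simp [dd]
      ring
    · rintro ⟨v, hv⟩ hx
      rw [LinearMap.mem_ker] at hx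
      have hphi : phi0 K v = 0 := hx
      rw [phi0_apply] at hphi
      have hsum := syz_sum hv
      rw [Fin.sum_univ_six] at hsum
      have hlow : v {0} * X 0 + v {1} * X 1 + v {2} * X 2 = 0 := by
        linear_combination hsum - hphi
      have hhigh : v {3} * X 3 + v {4} * X 4 + v {5} * X 5 = 0 := by
        linear_combination hphi
      obtain ⟨p, q, r, h0, h1, h2⟩ :=
        star (show (0:Fin 6) ≠ 1 by decide) (show (0:Fin 6) ≠ 2 by decide)
          (show (1:Fin 6) ≠ 2 by decide) _ _ _ hlow
      obtain ⟨p', q', r', h3, h4, h5⟩ :=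
        star (show (3:Fin 6) ≠ 4 by decide) (show (3:Fin 6) ≠ 5 by decide)
          (show (4:Fin 6) ≠ 5 by decide) _ _ _ hhigh
      rw [LinearMap.mem_range]
      refine ⟨fun s => if s = 0 then -p else if s = 1 then -q else if s = 2 then -r
        else if s = 3 then -p' else if s = 4 then -q' else -r', Subtype.ext ?_⟩
      show Gmap K _ = v
      funext T
      rw [Gmap_apply]
      by_cases hT : T.card = 1
      · obtain ⟨t, rfl⟩ := Finset.card_eq_one.1 hT
        fin_cases t
        · simp [dd]; linear_combination -h0
        · simp [dd]; linear_combination -h1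
        · simp [dd]; linear_combination -h2
        · simp [dd]; linear_combination -h3
        · simp [dd]; linear_combination -h4
        · simp [dd]; linear_combination -h5
      · rw [dd_nonsingle 0 1 hT, dd_nonsingle 0 2 hT, dd_nonsingle 1 2 hT,
          dd_nonsingle 3 4 hT, dd_nonsingle 3 5 hT, dd_nonsingle 4 5 hT,
          syz_supp hv hT]
        ring
  · -- range φ = I
    apply le_antisymm
    · rintro x ⟨y, rfl⟩
      rw [hI]
      have e : ((phi0 K).comp (Submodule.subtype (koszulSyzygy K 6 2))) y
          = phi0 K (y : Finset (Fin 6) → MvPolynomial (Fin 6) K) := rfl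
      rw [e, phi0_apply]
      exact syz_phi y.2
    · rw [hI, Ideal.span_mul_span', Ideal.span_le]
      rintro x ⟨ax, hax, bx, hbx, rfl⟩
      simp only [Set.mem_insert_iff, Set.mem_singleton_iff] at hax hbx
      have mk : ∀ i j : Fin 6, i < j →
          phi0 K (dd K i j) = X i * X j →
          X i * X j ∈ LinearMap.range ((phi0 K).comp
            (Submodule.subtype (koszulSyzygy K 6 2))) := by
        intro i j hij hval
        exact ⟨⟨dd K i j, dd_mem hij⟩, hval⟩
      rcases hax with rfl | rfl | rfl <;> rcases hbx with rfl | rfl | rfl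
      · exact mk 0 3 (by decide) (by rw [phi0_apply]; simp [dd]; ring)
      · exact mk 0 4 (by decide) (by rw [phi0_apply]; simp [dd]; ring)
      · exact mk 0 5 (by decide) (by rw [phi0_apply]; simp [dd]; ring)
      · exact mk 1 3 (by decide) (by rw [phi0_apply]; simp [dd]; ring)
      · exact mk 1 4 (by decide) (by rw [phi0_apply]; simp [dd]; ring)
      · exact mk 1 5 (by decide) (by rw [phi0_apply]; simp [dd]; ring)
      · exact mk 2 3 (by decide) (by rw [phi0_apply]; simp [dd]; ring)
      · exact mk 2 4 (by decide) (by rw [phi0_apply]; simp [dd]; ring)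
      · exact mk 2 5 (by decide) (by rw [phi0_apply]; simp [dd]; ring)
end
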